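/- arXiv:2306.02219 — 2 statements merged into one kernel-verified Lean document; each statement's English description precedes it below -/
import Mathlib

section
/- Let n ≥ 5 and let c : I_n → C_n be the closed walk based at 0 that goes once around the cycle graph, i.e., c(i) = i mod n for i = 0, 1, ..., n (so c has winding number 1). Then c is not based A-homotopic to the constant walk at 0 of length n. -/
/-!
Lift the walk and the homotopy to the universal cover `ℤ → C_n`: a step of a walk in `C_n`
(staying put or moving to a neighbour) lifts to a step `0, ±1` in `ℤ`, and the sum of these lifts
is the displacement of the lifted walk, `N` for the walk going once around and `0` for the
constant walk. Around a unit square of the grid `I_N □ I_k` the two ways of lifting agree: both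
are integers congruent to the same residue mod `n` and differ by at most `4 < n`. Hence moving a
row of the homotopy to the next row does not change the displacement, since the boundary columns
are constant.
-/

/-- The path graph `I_N` on vertices `{0, 1, …, N}`, with `i` adjacent to `j` iff `|i - j| = 1`. -/
def pathG (N : ℕ) : SimpleGraph (Fin (N + 1)) where
  Adj i j := (i : ℕ) + 1 = (j : ℕ) ∨ (j : ℕ) + 1 = (i : ℕ)
  symm := ⟨fun i j h => h.symm⟩
  loopless := ⟨fun i h => by rcases h with h | h <;> omega⟩

/-- The cycle graph `C_n` on vertices `ZMod n`, with `i` adjacent to `j` iff `j = i + 1` or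
`j = i - 1` (for `n ≥ 3`). -/
def cycleG (n : ℕ) : SimpleGraph (ZMod n) :=
  SimpleGraph.fromRel (fun i j => j = i + 1)

/-- A graph map `f : G → H`: for adjacent `u v` in `G`, either `f u = f v` or
`f u, f v` are adjacent in `H`. -/
def IsGraphMap {V W : Type*} (G : SimpleGraph V) (H : SimpleGraph W) (f : V → W) : Prop :=
  ∀ ⦃u v⦄, G.Adj u v → f u = f v ∨ H.Adj (f u) (f v)

/-- Walks `c, c' : I_N → G` (with matching endpoints) are based A-homotopic if there are `k` and a
graph map `α : I_N □ I_k → G` with `α (i, 0) = c i`, `α (i, k) = c' i`, `α (0, j) = c 0` and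
`α (N, j) = c N`. -/
def BasedAHomotopic {V : Type*} (G : SimpleGraph V) (N : ℕ) (c c' : Fin (N + 1) → V) : Prop :=
  ∃ (k : ℕ) (α : Fin (N + 1) × Fin (k + 1) → V),
    IsGraphMap ((pathG N).boxProd (pathG k)) G α ∧
    (∀ i, α (i, 0) = c i) ∧ (∀ i, α (i, Fin.last k) = c' i) ∧
    (∀ j, α (0, j) = c 0) ∧ (∀ j, α (Fin.last N, j) = c (Fin.last N))

theorem Fin.sum_succ_sub_castSucc {M : Type*} [AddCommGroup M] {N : ℕ} (f : Fin (N + 1) → M) :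
    ∑ i : Fin N, (f i.succ - f i.castSucc) = f (Fin.last N) - f 0 := by
  induction N with
  | zero => simp
  | succ N ih =>
    rw [Fin.sum_univ_castSucc]
    have := ih (f ∘ Fin.castSucc)
    simp only [Function.comp_apply, ← Fin.succ_castSucc, Fin.castSucc_zero] at this
    rw [this, Fin.succ_last]
    abel

theorem pathG_adj_castSucc_succ {N : ℕ} (i : Fin N) : (pathG N).Adj i.castSucc i.succ :=
  Or.inl (by simp)

section Cycle

variable {n : ℕ}

def liftStep (a b : ZMod n) : ℤ := if b = a then 0 else if b = a + 1 then 1 else -1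

theorem liftStep_self (a : ZMod n) : liftStep a a = 0 := if_pos rfl

theorem liftStep_add_one [Fact (1 < n)] (a : ZMod n) : liftStep a (a + 1) = 1 := by
  simp [liftStep]

theorem abs_liftStep_le_one (a b : ZMod n) : |liftStep a b| ≤ 1 := by
  unfold liftStep; split_ifs <;> norm_num

theorem intCast_liftStep {a b : ZMod n} (h : a = b ∨ (cycleG n).Adj a b) :
    (liftStep a b : ZMod n) = b - a := by
  rw [cycleG, SimpleGraph.fromRel_adj] at h
  unfold liftStep
  split_ifs with hba hsucc
  · simp [hba]
  · simp [hsucc]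
  · obtain rfl | ⟨-, rfl | rfl⟩ := h
    · exact absurd rfl hba
    · exact absurd rfl hsucc
    · push_cast; ring

theorem liftStep_add_liftStep_comm (hn : 5 ≤ n) {a b c d : ZMod n}
    (hab : a = b ∨ (cycleG n).Adj a b) (hbd : b = d ∨ (cycleG n).Adj b d)
    (hac : a = c ∨ (cycleG n).Adj a c) (hcd : c = d ∨ (cycleG n).Adj c d) :
    liftStep a b + liftStep b d = liftStep a c + liftStep c d := by
  rw [← sub_eq_zero]
  apply Int.eq_zero_of_abs_lt_dvd (m := n)
  · rw [← ZMod.intCast_zmod_eq_zero_iff_dvd]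
    push_cast
    rw [intCast_liftStep hab, intCast_liftStep hbd, intCast_liftStep hac, intCast_liftStep hcd]
    ring
  · have h₁ := abs_le.1 (abs_liftStep_le_one a b)
    have h₂ := abs_le.1 (abs_liftStep_le_one b d)
    have h₃ := abs_le.1 (abs_liftStep_le_one a c)
    have h₄ := abs_le.1 (abs_liftStep_le_one c d)
    rw [abs_lt]
    omega

variable {N : ℕ}

def liftDisplacement (w : Fin (N + 1) → ZMod n) : ℤ :=
  ∑ i : Fin N, liftStep (w i.castSucc) (w i.succ)

theorem liftDisplacement_const (a : ZMod n) :
    liftDisplacement (fun _ : Fin (N + 1) => a) = 0 := by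
  simp [liftDisplacement, liftStep_self]

theorem liftDisplacement_natCast [Fact (1 < n)] :
    liftDisplacement (fun i : Fin (N + 1) => ((i : ℕ) : ZMod n)) = N := by
  simp [liftDisplacement, liftStep_add_one]

theorem liftDisplacement_eq_of_adj (hn : 5 ≤ n) {w w' : Fin (N + 1) → ZMod n}
    (hw : IsGraphMap (pathG N) (cycleG n) w) (hw' : IsGraphMap (pathG N) (cycleG n) w')
    (hww' : ∀ i, w i = w' i ∨ (cycleG n).Adj (w i) (w' i))
    (h0 : w 0 = w' 0) (hN : w (Fin.last N) = w' (Fin.last N)) :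
    liftDisplacement w = liftDisplacement w' := by
  have hsquare : ∀ i : Fin N,
      liftStep (w' i.castSucc) (w' i.succ) - liftStep (w i.castSucc) (w i.succ) =
        liftStep (w i.succ) (w' i.succ) - liftStep (w i.castSucc) (w' i.castSucc) := fun i => by
    have := liftStep_add_liftStep_comm hn (hw (pathG_adj_castSucc_succ i)) (hww' i.succ)
      (hww' i.castSucc) (hw' (pathG_adj_castSucc_succ i))
    linarith
  have htelescope : liftDisplacement w' - liftDisplacement w = 0 := by
    rw [liftDisplacement, liftDisplacement, ← Finset.sum_sub_distrib, Finset.sum_congr rfl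
      fun i _ => hsquare i, Fin.sum_succ_sub_castSucc (fun i => liftStep (w i) (w' i)), h0, hN,
      liftStep_self, liftStep_self, sub_self]
  linarith

theorem BasedAHomotopic.liftDisplacement_eq (hn : 5 ≤ n) {c c' : Fin (N + 1) → ZMod n}
    (h : BasedAHomotopic (cycleG n) N c c') : liftDisplacement c = liftDisplacement c' := by
  obtain ⟨k, α, hα, hc, hc', h0, hN⟩ := h
  have hrow : ∀ j, IsGraphMap (pathG N) (cycleG n) fun i => α (i, j) := fun j _ _ hii' =>
    hα (SimpleGraph.boxProd_adj.2 (Or.inl ⟨hii', rfl⟩))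
  have hrow_eq : ∀ j, liftDisplacement (fun i => α (i, j)) = liftDisplacement c := by
    intro j
    induction j using Fin.induction with
    | zero => simp only [hc]
    | succ j ih =>
      rw [← ih]
      refine (liftDisplacement_eq_of_adj hn (hrow _) (hrow _) (fun i => ?_)
        (by rw [h0, h0]) (by rw [hN, hN])).symm
      exact hα (SimpleGraph.boxProd_adj.2 (Or.inr ⟨pathG_adj_castSucc_succ j, rfl⟩))
  rw [← hrow_eq (Fin.last k)]
  simp only [hc']

end Cycle

/-- For `n ≥ 5`, the closed walk `c : I_n → C_n` given by `c i = i mod n` (going once around the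
cycle, winding number `1`) is not based A-homotopic to the constant walk at `0` of length `n`. -/
theorem once_around_not_based_homotopic_to_constant (n : ℕ) (hn : 5 ≤ n) :
    ¬ BasedAHomotopic (cycleG n) n
      (fun i : Fin (n + 1) => ((i : ℕ) : ZMod n))
      (fun _ : Fin (n + 1) => (0 : ZMod n)) := by
  have : Fact (1 < n) := ⟨by omega⟩
  intro h
  have := h.liftDisplacement_eq hn
  rw [liftDisplacement_natCast, liftDisplacement_const] at this
  omega
end

section
/- Let n ≥ 5 and let c, c' : I_N → C_n be closed walks in the cycle graph C_n that are based A-homotopic (with c 0 = c' 0 = c N = c' N). Then c and c' have the same winding number. -/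
/-- `L : {0, …, N} → ℤ` is a lift of the walk `c : I_N → C_n`: consecutive values differ by
`-1`, `0` or `1`, and `L i ≡ c i (mod n)` for all `i`. -/
def IsLift (n N : ℕ) (c : Fin (N + 1) → ZMod n) (L : Fin (N + 1) → ℤ) : Prop :=
  (∀ i : Fin N,
      L i.succ - L i.castSucc = -1 ∨ L i.succ - L i.castSucc = 0 ∨ L i.succ - L i.castSucc = 1) ∧
  ∀ i, ((L i : ZMod n)) = c i

/-!
Lift every intermediate walk `α (·, j)` of the homotopy to `ℤ`, starting at a common lift of the
base point. Since `n ≥ 3`, all lifts of one walk have the same displacement. Since `n ≥ 5`, lifts of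
two pointwise adjacent walks that start at the same integer stay within distance `1` of each other,
so they end at the same integer when the walks end at the same vertex. Hence the displacement does
not change along the homotopy.
-/

lemma eq_of_intCast_eq_of_abs_sub_lt {n : ℕ} {x y : ℤ} (h : (x : ZMod n) = y) (hxy : |x - y| < n) :
    x = y :=
  (sub_eq_zero.mp
    (Int.eq_zero_of_abs_lt_dvd ((ZMod.intCast_eq_intCast_iff_dvd_sub y x n).mp h.symm) hxy))

lemma cycleG_exists_step {n : ℕ} {a b : ZMod n} (h : a = b ∨ (cycleG n).Adj a b) :
    ∃ s : ℤ, (s = -1 ∨ s = 0 ∨ s = 1) ∧ b - a = s := by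
  rcases h with rfl | h
  · exact ⟨0, by simp⟩
  · rw [cycleG, SimpleGraph.fromRel_adj] at h
    rcases h.2 with rfl | rfl
    · exact ⟨1, by simp⟩
    · exact ⟨-1, by simp⟩

namespace IsLift

variable {n N : ℕ} {c d : Fin (N + 1) → ZMod n} {L M : Fin (N + 1) → ℤ}

lemma exists_of_isGraphMap (hc : IsGraphMap (pathG N) (cycleG n) c) (a : ℤ)
    (ha : (a : ZMod n) = c 0) : ∃ L, IsLift n N c L ∧ L 0 = a := by
  choose s hs hcs using fun i : Fin N =>
    cycleG_exists_step (hc (show (pathG N).Adj i.castSucc i.succ from Or.inl rfl))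
  refine ⟨fun i => a + Fin.partialSum s i, ⟨fun i => ?_, fun i => ?_⟩, by simp⟩
  · simpa only [Fin.partialSum_succ, add_sub_add_left_eq_sub, add_sub_cancel_left] using hs i
  · induction i using Fin.induction with
    | zero => simpa using ha
    | succ i ih =>
      dsimp only at ih ⊢
      rw [Fin.partialSum_succ, ← add_assoc, Int.cast_add, ih, ← hcs i]
      ring

lemma sub_eq_sub (hn : 3 ≤ n) (hL : IsLift n N c L) (hM : IsLift n N c M) (i : Fin (N + 1)) :
    L i - L 0 = M i - M 0 := by
  induction i using Fin.induction with
  | zero => simp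
  | succ i ih =>
    have hstep : L i.succ - L i.castSucc = M i.succ - M i.castSucc := by
      refine eq_of_intCast_eq_of_abs_sub_lt (by push_cast; rw [hL.2, hL.2, hM.2, hM.2]) ?_
      have := hL.1 i
      have := hM.1 i
      rw [abs_lt]
      constructor <;> omega
    omega

lemma abs_sub_le_one (hn : 5 ≤ n) (hL : IsLift n N c L) (hM : IsLift n N d M)
    (hcd : ∀ i, c i = d i ∨ (cycleG n).Adj (c i) (d i)) (h0 : L 0 = M 0) (i : Fin (N + 1)) :
    |M i - L i| ≤ 1 := by
  induction i using Fin.induction with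
  | zero => simp [h0]
  | succ i ih =>
    obtain ⟨s, hs, hds⟩ := cycleG_exists_step (hcd i.succ)
    -- The new difference lies in `[-3, 3]`, so for `n ≥ 5` its residue `s` determines it.
    have hdiff : M i.succ - L i.succ = s := by
      refine eq_of_intCast_eq_of_abs_sub_lt (by push_cast; rw [hL.2, hM.2, hds]) ?_
      have := hL.1 i
      have := hM.1 i
      rw [abs_le] at ih
      rw [abs_lt]
      constructor <;> omega
    rw [hdiff, abs_le]
    omega

lemma last_eq_of_adj (hn : 5 ≤ n) (hL : IsLift n N c L) (hM : IsLift n N d M)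
    (hcd : ∀ i, c i = d i ∨ (cycleG n).Adj (c i) (d i)) (h0 : L 0 = M 0)
    (hlast : c (Fin.last N) = d (Fin.last N)) : L (Fin.last N) = M (Fin.last N) := by
  refine eq_of_intCast_eq_of_abs_sub_lt (by rw [hL.2, hM.2, hlast]) ?_
  rw [abs_sub_comm]
  have := abs_sub_le_one hn hL hM hcd h0 (Fin.last N)
  omega

end IsLift

lemma BasedAHomotopic.lift_sub_eq {n N : ℕ} (hn : 5 ≤ n) {c c' : Fin (N + 1) → ZMod n}
    (hhom : BasedAHomotopic (cycleG n) N c c') {L L' : Fin (N + 1) → ℤ} (hL : IsLift n N c L)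
    (hL' : IsLift n N c' L') : L (Fin.last N) - L 0 = L' (Fin.last N) - L' 0 := by
  obtain ⟨k, α, hα, hbot, htop, hleft, hright⟩ := hhom
  have hrow : ∀ j, IsGraphMap (pathG N) (cycleG n) (fun i => α (i, j)) := fun _ _ _ h =>
    hα (SimpleGraph.boxProd_adj.mpr (Or.inl ⟨h, rfl⟩))
  choose M hM hM0 using fun j => IsLift.exists_of_isGraphMap (hrow j) (L 0)
    (by rw [hleft, hL.2])
  have hstep (j : Fin k) : M j.castSucc (Fin.last N) = M j.succ (Fin.last N) :=
    (hM j.castSucc).last_eq_of_adj hn (hM j.succ)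
      (fun _ => hα (SimpleGraph.boxProd_adj.mpr (Or.inr ⟨Or.inl rfl, rfl⟩)))
      (by rw [hM0, hM0]) (by simp only [hright])
  have hend : M 0 (Fin.last N) = M (Fin.last k) (Fin.last N) := by
    induction Fin.last k using Fin.induction with
    | zero => rfl
    | succ j ih => exact ih.trans (hstep j)
  have hM_bot : IsLift n N c (M 0) := funext hbot ▸ hM 0
  have hM_top : IsLift n N c' (M (Fin.last k)) := funext htop ▸ hM (Fin.last k)
  calc L (Fin.last N) - L 0 = M 0 (Fin.last N) - M 0 0 := hL.sub_eq_sub (by omega) hM_bot _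
    _ = M (Fin.last k) (Fin.last N) - M (Fin.last k) 0 := by rw [hend, hM0, hM0]
    _ = L' (Fin.last N) - L' 0 := hM_top.sub_eq_sub (by omega) hL' _

theorem based_homotopic_same_winding_general (n N : ℕ) (hn : 5 ≤ n)
    (c c' : Fin (N + 1) → ZMod n)
    (hhom : BasedAHomotopic (cycleG n) N c c')
    (L L' : Fin (N + 1) → ℤ) (hL : IsLift n N c L) (hL' : IsLift n N c' L')
    (w w' : ℤ)
    (hw : L (Fin.last N) - L 0 = n * w) (hw' : L' (Fin.last N) - L' 0 = n * w') :
    w = w' := by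
  have hdisp := hhom.lift_sub_eq hn hL hL'
  rw [hw, hw'] at hdisp
  exact mul_left_cancel₀ (by exact_mod_cast (by omega : n ≠ 0)) hdisp

/-- For `n ≥ 5`, based A-homotopic closed walks `c, c' : I_N → C_n` have the same winding number:
if `L, L'` are integer lifts of `c, c'` and `L N - L 0 = n * w`, `L' N - L' 0 = n * w'`, then
`w = w'`. -/
theorem based_homotopic_same_winding (n N : ℕ) (hn : 5 ≤ n)
    (c c' : Fin (N + 1) → ZMod n)
    (hc : IsGraphMap (pathG N) (cycleG n) c) (hc' : IsGraphMap (pathG N) (cycleG n) c')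
    (h0 : c 0 = c' 0) (hN : c (Fin.last N) = c' (Fin.last N))
    (hclosed : c 0 = c (Fin.last N))
    (hhom : BasedAHomotopic (cycleG n) N c c')
    (L L' : Fin (N + 1) → ℤ) (hL : IsLift n N c L) (hL' : IsLift n N c' L')
    (w w' : ℤ)
    (hw : L (Fin.last N) - L 0 = n * w) (hw' : L' (Fin.last N) - L' 0 = n * w') :
    w = w' :=
  based_homotopic_same_winding_general n N hn c c' hhom L L' hL hL' w w' hw hw'
end
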